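/- arXiv:2511.22013 — 2 statements merged into one kernel-verified Lean document; each statement's English description precedes it below -/
import Mathlib

section
/- Let m, n, r₁, r₂ be real numbers with m ∉ {1, −1} and r₂ = n − r₁ − 1. The quadratic form q(x, y) = ((r₁−1)(m+r₁)/(m+1)) x² + 2(((r₁−1)(r₂−1)/(m+1)) − ((m+n−2)/(m−1))) xy + ((r₂−1)(m+r₂)/(m+1)) y², viewed as a quadratic in y (for fixed x), has discriminant equal to (4(m+n−2)/((m−1)²)) · (m(n−1) − (m−1) r₁ r₂) · x². In particular, if q(x, y) = 0 has a solution with x ≠ 0 and the leading coefficient (r₂−1)(m+r₂)/(m+1) is nonzero, then (m+n−2)(m(n−1) − (m−1) r₁ r₂) ≥ 0. -/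
/-- discriminant of the quadratic form (5.1.4) in `y`:
with `A = (r₂−1)(m+r₂)/(m+1)`, `B = 2(((r₁−1)(r₂−1)/(m+1)) − ((m+n−2)/(m−1)))·x`,
`C = (r₁−1)(m+r₁)/(m+1)·x²`, one has
`B² − 4AC = (4(m+n−2)/(m−1)²)(m(n−1) − (m−1)r₁r₂)x²`; in particular, if the
quadratic vanishes for some real `y` with `x ≠ 0` and `A ≠ 0`, then
`(m+n−2)(m(n−1) − (m−1)r₁r₂) ≥ 0`. -/
theorem stmt_11 (m n r₁ r₂ : ℝ) (hm1 : m ≠ 1) (hm2 : m ≠ -1)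
    (hr : r₂ = n - r₁ - 1) (x : ℝ) :
    ((2 * ((r₁ - 1) * (r₂ - 1) / (m + 1) - (m + n - 2) / (m - 1)) * x) ^ 2
        - 4 * ((r₂ - 1) * (m + r₂) / (m + 1))
            * ((r₁ - 1) * (m + r₁) / (m + 1) * x ^ 2)
      = (4 * (m + n - 2) / (m - 1) ^ 2)
          * (m * (n - 1) - (m - 1) * r₁ * r₂) * x ^ 2) ∧
    ((∃ y : ℝ,
        (r₁ - 1) * (m + r₁) / (m + 1) * x ^ 2
          + 2 * ((r₁ - 1) * (r₂ - 1) / (m + 1) - (m + n - 2) / (m - 1)) * x * y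
          + (r₂ - 1) * (m + r₂) / (m + 1) * y ^ 2 = 0) →
      x ≠ 0 → (r₂ - 1) * (m + r₂) / (m + 1) ≠ 0 →
      (m + n - 2) * (m * (n - 1) - (m - 1) * r₁ * r₂) ≥ 0) := by
  have h1 : m - 1 ≠ 0 := sub_ne_zero.mpr hm1
  have h2 : m + 1 ≠ 0 := by intro h; apply hm2; linarith
  have key : (2 * ((r₁ - 1) * (r₂ - 1) / (m + 1) - (m + n - 2) / (m - 1)) * x) ^ 2
        - 4 * ((r₂ - 1) * (m + r₂) / (m + 1))
            * ((r₁ - 1) * (m + r₁) / (m + 1) * x ^ 2)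
      = (4 * (m + n - 2) / (m - 1) ^ 2)
          * (m * (n - 1) - (m - 1) * r₁ * r₂) * x ^ 2 := by
    subst hr
    field_simp
    ring
  refine ⟨key, ?_⟩
  rintro ⟨y, hy⟩ hx hA
  set A := (r₂ - 1) * (m + r₂) / (m + 1)
  set B := 2 * ((r₁ - 1) * (r₂ - 1) / (m + 1) - (m + n - 2) / (m - 1)) * x
  set C := (r₁ - 1) * (m + r₁) / (m + 1) * x ^ 2
  have hy' : A * (y * y) + B * y + C = 0 := by rw [← hy]; ring
  have hd : discrim A B C = (2 * A * y + B) ^ 2 :=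
    discrim_eq_sq_of_quadratic_eq_zero hy'
  have hd2 : discrim A B C = B ^ 2 - 4 * A * C := by
    unfold discrim; ring
  have hnn : (0:ℝ) ≤ (4 * (m + n - 2) / (m - 1) ^ 2)
      * (m * (n - 1) - (m - 1) * r₁ * r₂) * x ^ 2 := by
    rw [← key, ← hd2, hd]; positivity
  have hx2 : (0:ℝ) < x ^ 2 := by positivity
  have hm2' : (0:ℝ) < (m - 1) ^ 2 := by positivity
  have heq : (4 * (m + n - 2) / (m - 1) ^ 2)
      * (m * (n - 1) - (m - 1) * r₁ * r₂) * x ^ 2 * (m - 1) ^ 2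
      = 4 * (m + n - 2) * (m * (n - 1) - (m - 1) * r₁ * r₂) * x ^ 2 := by
    field_simp
  have h4 : 0 ≤ 4 * (m + n - 2) * (m * (n - 1) - (m - 1) * r₁ * r₂) * x ^ 2 := by
    rw [← heq]; exact mul_nonneg hnn hm2'.le
  nlinarith [h4, hx2]
end

section
/- Let m ≠ 0, λ ∈ ℝ, and suppose on an interval I real functions f, X, Y, S (with S = (r₁−1)X + (r₂−1)Y for real constants r₁, r₂) satisfy: (a) S = ((m+1)/m) f'; (b) f'(X + Y + (1/m) f') = (m(n−1)/(m−1)) XY for n ≥ 4 and m ≠ 1; and (c) ((m+1)/m)(f')² + (m+1) f'(X+Y) = (m(m+1)(n−1)/(m−1)) XY + mλ. Then λ = 0. -/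
/-- in the two-eigenvalue case with the linear constraint
`S = ((m+1)/m) f'`, the identity `f'(X + Y + (1/m)f') = (m(n−1)/(m−1)) XY`,
and equation (5.27), the quasi-Einstein constant `λ` must vanish. -/
theorem stmt_14 (m lam : ℝ) (hm : m ≠ 0) (n : ℕ) (hn : 4 ≤ n) (hm1 : m ≠ 1)
    (r₁ r₂ : ℝ) (I : Set ℝ) (hne : I.Nonempty)
    (f' X Y S : ℝ → ℝ)
    (hS : ∀ s ∈ I, S s = (r₁ - 1) * X s + (r₂ - 1) * Y s)
    (ha : ∀ s ∈ I, S s = ((m + 1) / m) * f' s)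
    (hb : ∀ s ∈ I,
      f' s * (X s + Y s + (1 / m) * f' s)
        = (m * ((n : ℝ) - 1) / (m - 1)) * (X s * Y s))
    (hc : ∀ s ∈ I,
      ((m + 1) / m) * (f' s) ^ 2 + (m + 1) * f' s * (X s + Y s)
        = (m * (m + 1) * ((n : ℝ) - 1) / (m - 1)) * (X s * Y s) + m * lam) :
    lam = 0 := by
  obtain ⟨s, hs⟩ := hne
  have hb' := hb s hs
  have hc' := hc s hs
  have hm1' : m - 1 ≠ 0 := sub_ne_zero.mpr hm1
  have key : lam * (m * (m - 1) * m) = 0 := by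
    have h := congrArg (fun t => (m + 1) * t) hb'
    field_simp at h hc'
    linear_combination h - hc'
  rcases mul_eq_zero.mp key with h | h
  · exact h
  · exact absurd h (mul_ne_zero (mul_ne_zero hm hm1') hm)
end
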